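/- Suppose for every R > R₀ there is a sequence r_n → ∞ with B(0, r_n) ⊆ T(f^n(B(0, R))). Then for any R' > R > R₀, the set A(f) defined via radius R equals the set defined via radius R', where A(f) = {x : ∃ L ∈ ℕ, ∀ n ∈ ℕ, f^{n+L}(x) ∉ T(f^n(B(0,R)))}. -/

import Mathlib

open Set Metric Filter Bornology Topology

noncomputable section

/-- The topological hull `T(E)`: the union of `E` with all bounded connected
components of its complement. -/
def topHull {m : ℕ} (E : Set (EuclideanSpace ℝ (Fin m))) : Set (EuclideanSpace ℝ (Fin m)) :=
  E ∪ {x | IsBounded (connectedComponentIn Eᶜ x)}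

/-- The covering property (1a): for each `R > R₀` there exist `r_n → ∞` with
`B(0, r_n) ⊆ T(f^n(B(0,R)))`. -/
def CoveringProperty {m : ℕ} (f : EuclideanSpace ℝ (Fin m) → EuclideanSpace ℝ (Fin m))
    (R₀ : ℝ) : Prop :=
  ∀ R > R₀, ∃ r : ℕ → ℝ, Tendsto r atTop atTop ∧
    ∀ n : ℕ, ball (0 : EuclideanSpace ℝ (Fin m)) (r n) ⊆ topHull (f^[n] '' ball 0 R)

/-- The fast escaping set defined via radius `R`:
`A(f) = {x : ∃ L, ∀ n, f^{n+L}(x) ∉ T(f^n(B(0,R)))}`. -/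
def fastEscaping {m : ℕ} (f : EuclideanSpace ℝ (Fin m) → EuclideanSpace ℝ (Fin m))
    (R : ℝ) : Set (EuclideanSpace ℝ (Fin m)) :=
  {x | ∃ L : ℕ, ∀ n : ℕ, f^[n + L] x ∉ topHull (f^[n] '' ball (0 : EuclideanSpace ℝ (Fin m)) R)}

/-!
Shrinking the radius from `R'` to `R > R₀` costs only a bounded shift of the iteration index.
Pick `R₀ < R₁ < R` and, by the covering property, `k` with `B̄(0,R') ⊆ T(f^k(B̄(0,R₁)))`. A continuous
open map sends a bounded complementary component of a compact set `K` into a bounded complementary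
component of `f(K)`, so `f^n(T(K)) ⊆ T(f^n(K))`; as `T` is a hull operator this gives
`T(f^n(B(0,R'))) ⊆ T(f^{n+k}(B(0,R)))` for all `n`, and the delay `L` in the definition of `A(f)`
absorbs the shift `k`.
-/

section ConnectedComponent

variable {X Y : Type*} [TopologicalSpace X] [LocallyConnectedSpace X] [TopologicalSpace Y]

theorem closure_connectedComponentIn_compl_subset {K : Set X} (hK : IsClosed K) (x : X) :
    closure (connectedComponentIn Kᶜ x) ⊆ connectedComponentIn Kᶜ x ∪ K := by
  intro y hy
  by_contra hyUK
  have hyK : y ∈ Kᶜ := fun h => hyUK (Or.inr h)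
  obtain ⟨z, hzy, hzx⟩ := mem_closure_iff.1 hy _ hK.isOpen_compl.connectedComponentIn
    (mem_connectedComponentIn hyK)
  have hyx : y ∈ connectedComponentIn Kᶜ x := by
    rw [connectedComponentIn_eq hzx, ← connectedComponentIn_eq hzy]
    exact mem_connectedComponentIn hyK
  exact hyUK (Or.inl hyx)

theorem connectedComponentIn_compl_image_subset [T2Space Y] {f : X → Y} (hf : Continuous f)
    (hopen : IsOpenMap f) {K : Set X} (hK : IsClosed K) {x : X}
    (hU : IsCompact (closure (connectedComponentIn Kᶜ x))) :
    connectedComponentIn (f '' K)ᶜ (f x) ⊆ f '' connectedComponentIn Kᶜ x := by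
  set U := connectedComponentIn Kᶜ x
  by_cases hfx : f x ∈ f '' K
  · rw [connectedComponentIn_eq_empty (show f x ∉ (f '' K)ᶜ from not_not_intro hfx)]
    exact empty_subset _
  have hxU : x ∈ U := mem_connectedComponentIn fun h => hfx (mem_image_of_mem f h)
  -- `f '' U` is open and `f '' closure U` is closed with `f '' closure U \ f '' U ⊆ f '' K`, so the
  -- component of `f x`, which avoids `f '' K`, cannot leave `f '' U`.
  have hcover : connectedComponentIn (f '' K)ᶜ (f x) ⊆ f '' U ∪ (f '' closure U)ᶜ := by
    rintro z hz
    by_cases hzU : z ∈ f '' closure U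
    · obtain ⟨y, hy, rfl⟩ := hzU
      rcases closure_connectedComponentIn_compl_subset hK x hy with hyU | hyK
      · exact Or.inl (mem_image_of_mem f hyU)
      · exact absurd (mem_image_of_mem f hyK) (connectedComponentIn_subset _ _ hz)
    · exact Or.inr hzU
  exact isPreconnected_connectedComponentIn.subset_left_of_subset_union
    (hopen U hK.isOpen_compl.connectedComponentIn) (hU.image hf).isClosed.isOpen_compl
    (disjoint_compl_right_iff_subset.2 (image_mono subset_closure)) hcover
    ⟨f x, mem_connectedComponentIn hfx, mem_image_of_mem f hxU⟩

end ConnectedComponent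

section TopHull

variable {m : ℕ}

theorem subset_topHull (E : Set (EuclideanSpace ℝ (Fin m))) : E ⊆ topHull E :=
  subset_union_left

theorem topHull_mono {E F : Set (EuclideanSpace ℝ (Fin m))} (h : E ⊆ F) :
    topHull E ⊆ topHull F := by
  rintro x (hxE | hxB)
  · exact subset_topHull F (h hxE)
  · by_cases hxF : x ∈ F
    · exact Or.inl hxF
    · exact Or.inr (IsBounded.subset (t := connectedComponentIn Eᶜ x) hxB
        (connectedComponentIn_mono x (compl_subset_compl.2 h)))

theorem topHull_topHull (E : Set (EuclideanSpace ℝ (Fin m))) : topHull (topHull E) = topHull E := by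
  refine (subset_topHull _).antisymm' fun x hx => ?_
  by_contra hxE
  have hxEc : x ∈ Eᶜ := fun h => hxE (subset_topHull E h)
  have hunb : ¬IsBounded (connectedComponentIn Eᶜ x) := fun hb => hxE (Or.inr hb)
  have hsub : connectedComponentIn Eᶜ x ⊆ (topHull E)ᶜ := by
    rintro y hy (hyE | hyB)
    · exact connectedComponentIn_subset Eᶜ x hy hyE
    · exact hunb (by rwa [connectedComponentIn_eq hy])
  rcases hx with hx | hx
  · exact hxE hx
  · exact hunb (IsBounded.subset hx
      (isPreconnected_connectedComponentIn.subset_connectedComponentIn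
        (mem_connectedComponentIn hxEc) hsub))

theorem topHull_subset_topHull_of_subset {E F : Set (EuclideanSpace ℝ (Fin m))}
    (h : E ⊆ topHull F) : topHull E ⊆ topHull F :=
  (topHull_mono h).trans (topHull_topHull F).subset

variable {f : EuclideanSpace ℝ (Fin m) → EuclideanSpace ℝ (Fin m)}

theorem image_topHull_subset (hf : Continuous f) (hopen : IsOpenMap f)
    {K : Set (EuclideanSpace ℝ (Fin m))} (hK : IsClosed K) : f '' topHull K ⊆ topHull (f '' K) := by
  rintro _ ⟨x, hxK | hxB, rfl⟩
  · exact subset_topHull _ (mem_image_of_mem f hxK)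
  · by_cases hfx : f x ∈ f '' K
    · exact subset_topHull _ hfx
    have hU : IsCompact (closure (connectedComponentIn Kᶜ x)) := IsBounded.isCompact_closure hxB
    exact Or.inr (((hU.image hf).isBounded.subset (image_mono subset_closure)).subset
      (connectedComponentIn_compl_image_subset hf hopen hK hU))

theorem iterate_image_topHull_subset (hf : Continuous f) (hopen : IsOpenMap f)
    {K : Set (EuclideanSpace ℝ (Fin m))} (hK : IsCompact K) (n : ℕ) :
    f^[n] '' topHull K ⊆ topHull (f^[n] '' K) := by
  induction n with
  | zero => simp
  | succ n ih =>
    rw [Function.iterate_succ', image_comp, image_comp]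
    exact (image_mono ih).trans
      (image_topHull_subset hf hopen ((hK.image (hf.iterate n)).isClosed))

end TopHull

section FastEscaping

variable {m : ℕ} {f : EuclideanSpace ℝ (Fin m) → EuclideanSpace ℝ (Fin m)}

theorem CoveringProperty.exists_topHull_subset_shift (hf : Continuous f) (hopen : IsOpenMap f)
    {R₀ : ℝ} (hcov : CoveringProperty f R₀) {R : ℝ} (hR : R₀ < R) (R' : ℝ) :
    ∃ k : ℕ, ∀ n : ℕ, topHull (f^[n] '' ball 0 R') ⊆ topHull (f^[n + k] '' ball 0 R) := by
  obtain ⟨R₁, hR₀₁, hR₁⟩ := exists_between hR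
  obtain ⟨r, hr, hball⟩ := hcov R₁ hR₀₁
  obtain ⟨k, hk⟩ := (hr.eventually_gt_atTop R').exists
  have hbase : closedBall (0 : EuclideanSpace ℝ (Fin m)) R' ⊆
      topHull (f^[k] '' closedBall 0 R₁) :=
    (closedBall_subset_ball hk).trans
      ((hball k).trans (topHull_mono (image_mono ball_subset_closedBall)))
  refine ⟨k, fun n => topHull_subset_topHull_of_subset ?_⟩
  calc f^[n] '' ball 0 R' ⊆ f^[n] '' topHull (f^[k] '' closedBall 0 R₁) :=
        image_mono (ball_subset_closedBall.trans hbase)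
    _ ⊆ topHull (f^[n + k] '' closedBall 0 R₁) := by
        rw [Function.iterate_add, image_comp]
        exact iterate_image_topHull_subset hf hopen
          ((isCompact_closedBall 0 R₁).image (hf.iterate k)) n
    _ ⊆ topHull (f^[n + k] '' ball 0 R) :=
        topHull_mono (image_mono (closedBall_subset_ball hR₁))

theorem fastEscaping_anti {R R' : ℝ} (h : R ≤ R') : fastEscaping f R' ⊆ fastEscaping f R :=
  fun _ ⟨L, hL⟩ => ⟨L, fun n hn => hL n (topHull_mono (image_mono (ball_subset_ball h)) hn)⟩

theorem fastEscaping_subset_of_topHull_subset_shift {R R' : ℝ} {k : ℕ}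
    (h : ∀ n : ℕ, topHull (f^[n] '' ball 0 R') ⊆ topHull (f^[n + k] '' ball 0 R)) :
    fastEscaping f R ⊆ fastEscaping f R' := by
  rintro x ⟨L, hL⟩
  refine ⟨L + k, fun n hn => hL (n + k) ?_⟩
  rw [show n + k + L = n + (L + k) by omega]
  exact h n hn

end FastEscaping

theorem fastEscaping_indep_of_radius {m : ℕ}
    (f : EuclideanSpace ℝ (Fin m) → EuclideanSpace ℝ (Fin m))
    (hf : Continuous f) (hopen : IsOpenMap f)
    (R₀ : ℝ) (hcov : CoveringProperty f R₀)
    (R R' : ℝ) (hR : R₀ < R) (hRR' : R < R') :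
    fastEscaping f R = fastEscaping f R' := by
  obtain ⟨k, hk⟩ := hcov.exists_topHull_subset_shift hf hopen hR R'
  exact (fastEscaping_subset_of_topHull_subset_shift hk).antisymm (fastEscaping_anti hRR'.le)
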